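/- Let P be a finite p-group of nilpotency class strictly less than p that is generated by elements of order dividing p, and suppose every element of the commutator subgroup [P,P] has order dividing p. Then every element of P has order dividing p. -/

import Mathlib

/-
Hall–Petrescu via polynomial sequences. Let `D f n = (f n)⁻¹ * f (n + 1)` and index the lower
central series as `γ 1 = G`, `γ 2 = ⁅G, G⁆`, …. Sequences built from `n ↦ c ^ n.choose k` with
`c ∈ γ (s + k)` by products, inverses, conjugation and commutators (weights adding) have weight `s`,
i.e. values in `γ s`, and the commutator identities for `D (f g)`, `D f⁻¹`, `D (g⁻¹ f g)` and
`D ⁅f, g⁆` show that `D` raises the weight by one. So if such an `f` of weight `0` vanishes below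
`k`, then `f k = Dᵏ f 0 ∈ γ k`, and dividing by `n ↦ f k ^ n.choose k` makes it vanish below `k + 1`.
Applied to `f n = (a b)ⁿ b⁻ⁿ a⁻ⁿ`, which vanishes at `0` and `1`, this writes `f p` as a product of
`g_k ^ p.choose k` with `g_k ∈ γ k`, `2 ≤ k ≤ p`. For `k < p` the factor is trivial since
`g_k ∈ ⁅G, G⁆` and `p ∣ p.choose k`, and `g_p ∈ γ p = ⊥` since the class is less than `p`. Hence
`x ↦ x ^ p` is multiplicative, and the elements with `x ^ p = 1` form a subgroup.
-/

open scoped commutatorElement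

section

variable {G : Type*} [Group G]

theorem Subgroup.commutator_commutator_le_of_rotate {A B C N : Subgroup G} [N.Normal]
    (h1 : ⁅⁅B, C⁆, A⁆ ≤ N) (h2 : ⁅⁅C, A⁆, B⁆ ≤ N) : ⁅⁅A, B⁆, C⁆ ≤ N := by
  have in_quotient : ∀ X Y Z : Subgroup G, ⁅⁅X, Y⁆, Z⁆ ≤ N ↔
      ⁅⁅X.map (QuotientGroup.mk' N), Y.map (QuotientGroup.mk' N)⁆,
        Z.map (QuotientGroup.mk' N)⁆ = ⊥ := by
    intro X Y Z
    rw [← Subgroup.map_commutator, ← Subgroup.map_commutator, Subgroup.map_eq_bot_iff,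
      QuotientGroup.ker_mk']
  rw [in_quotient] at h1 h2 ⊢
  exact Subgroup.commutator_commutator_eq_bot_of_rotate h1 h2

theorem Subgroup.commutator_lowerCentralSeries_le (i j : ℕ) :
    ⁅(⊤ : Subgroup G).lowerCentralSeries i, (⊤ : Subgroup G).lowerCentralSeries j⁆ ≤
      (⊤ : Subgroup G).lowerCentralSeries (i + j + 1) := by
  have top_comm (j : ℕ) : ⁅(⊤ : Subgroup G), (⊤ : Subgroup G).lowerCentralSeries j⁆ =
      (⊤ : Subgroup G).lowerCentralSeries (j + 1) := by
    rw [Subgroup.commutator_comm]; rfl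
  have anti := (⊤ : Subgroup G).lowerCentralSeries_antitone
  induction i generalizing j with
  | zero => exact (top_comm j).le.trans (anti (by omega))
  | succ i ih =>
    apply Subgroup.commutator_commutator_le_of_rotate
    · rw [top_comm, Subgroup.commutator_comm]
      exact (ih (j + 1)).trans (anti (by omega))
    · rw [Subgroup.commutator_comm ((⊤ : Subgroup G).lowerCentralSeries j)]
      exact (Subgroup.commutator_mono (ih j) le_rfl).trans (anti (show _ ≤ i + j + 2 by omega))

variable (G) in
/-- The lower central series indexed as `γ 1 = G`, `γ 2 = ⁅G, G⁆`, …, and extended by `γ 0 = G`,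
so that `⁅γ s, γ t⁆ ≤ γ (s + t)` for all `s t`. -/
def lowerCentralGamma (k : ℕ) : Subgroup G := (⊤ : Subgroup G).lowerCentralSeries (k - 1)

instance lowerCentralGamma_normal (k : ℕ) : (lowerCentralGamma G k).Normal := by
  unfold lowerCentralGamma; infer_instance

theorem lowerCentralGamma_antitone : Antitone (lowerCentralGamma G) :=
  fun _ _ h => Subgroup.lowerCentralSeries_antitone _ (Nat.sub_le_sub_right h 1)

theorem commutator_lowerCentralGamma_le (s t : ℕ) :
    ⁅lowerCentralGamma G s, lowerCentralGamma G t⁆ ≤ lowerCentralGamma G (s + t) := by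
  rcases Nat.eq_zero_or_pos s with rfl | hs
  · simpa using Subgroup.commutator_le_right _ _
  rcases Nat.eq_zero_or_pos t with rfl | ht
  · simpa using Subgroup.commutator_le_left _ _
  refine (Subgroup.commutator_lowerCentralSeries_le _ _).trans ?_
  exact Subgroup.lowerCentralSeries_antitone _ (by omega)

def mulFwdDiff (f : ℕ → G) (n : ℕ) : G := (f n)⁻¹ * f (n + 1)

theorem mulFwdDiff_pow_choose_succ (c : G) (k n : ℕ) :
    mulFwdDiff (fun n => c ^ n.choose (k + 1)) n = c ^ n.choose k := by
  rw [mulFwdDiff, Nat.choose_succ_succ', Nat.add_comm (n.choose k), pow_add, inv_mul_cancel_left]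

inductive IsPolySeq : ℕ → (ℕ → G) → Prop
  | choosePow {s d k : ℕ} {c : G} :
      c ∈ lowerCentralGamma G d → s + k ≤ d → IsPolySeq s (fun n => c ^ n.choose k)
  | mul {s : ℕ} {f g : ℕ → G} : IsPolySeq s f → IsPolySeq s g → IsPolySeq s (fun n => f n * g n)
  | inv {s : ℕ} {f : ℕ → G} : IsPolySeq s f → IsPolySeq s (fun n => (f n)⁻¹)
  | conj {s t : ℕ} {f g : ℕ → G} :
      IsPolySeq s f → IsPolySeq t g → IsPolySeq s (fun n => (g n)⁻¹ * f n * g n)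
  | comm {s t : ℕ} {f g : ℕ → G} :
      IsPolySeq s f → IsPolySeq t g → IsPolySeq (s + t) (fun n => ⁅f n, g n⁆)

namespace IsPolySeq

variable {s : ℕ} {f : ℕ → G}

theorem congr (hf : IsPolySeq s f) {g : ℕ → G} (h : ∀ n, f n = g n) : IsPolySeq s g :=
  funext h ▸ hf

theorem one (s : ℕ) : IsPolySeq s (fun _ => (1 : G)) :=
  (choosePow (k := 0) (one_mem (lowerCentralGamma G s)) le_rfl).congr fun _ => one_pow _

theorem pow (c : G) : IsPolySeq 0 (fun n => c ^ n) :=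
  (choosePow (k := 1) (d := 1) (Subgroup.mem_top c) le_rfl).congr fun n => by
    rw [Nat.choose_one_right]

theorem mono (hf : IsPolySeq s f) {t : ℕ} (hts : t ≤ s) : IsPolySeq t f := by
  induction hf generalizing t with
  | choosePow hc hd => exact choosePow hc (by omega)
  | mul _ _ ih₁ ih₂ => exact mul (ih₁ hts) (ih₂ hts)
  | inv _ ih => exact inv (ih hts)
  | conj _ hg ih _ => exact conj (ih hts) hg
  | @comm s t' f g hf hg ihf ihg =>
    rcases le_total t t' with htt' | htt'
    · simpa using comm (ihf (Nat.zero_le s)) (ihg htt')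
    · have := comm (ihf (show t - t' ≤ s by omega)) hg
      rwa [Nat.sub_add_cancel htt'] at this

theorem mem (hf : IsPolySeq s f) (n : ℕ) : f n ∈ lowerCentralGamma G s := by
  induction hf with
  | choosePow hc hd => exact Subgroup.pow_mem _ (lowerCentralGamma_antitone (by omega) hc) _
  | mul _ _ ih₁ ih₂ => exact mul_mem ih₁ ih₂
  | inv _ ih => exact inv_mem ih
  | @conj s t f g _ _ ih _ =>
    simpa [mul_assoc] using (lowerCentralGamma_normal s).conj_mem _ ih (g n)⁻¹
  | comm _ _ ihf ihg =>
    exact commutator_lowerCentralGamma_le _ _ (Subgroup.commutator_mem_commutator ihf ihg)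

theorem mulFwdDiff (hf : IsPolySeq s f) : IsPolySeq (s + 1) (mulFwdDiff f) := by
  induction hf with
  | @choosePow s d k c hc hd =>
    cases k with
    | zero => exact (one (s + 1)).congr fun n => by simp [_root_.mulFwdDiff]
    | succ k => exact (choosePow hc (by omega)).congr fun n => (mulFwdDiff_pow_choose_succ c k n).symm
  | @mul s f g hf hg ihf ihg =>
    refine (mul (conj ihf hg) ihg).congr fun n => ?_
    simp only [_root_.mulFwdDiff]
    group
  | @inv s f hf ih =>
    refine (conj (inv ih) (inv hf)).congr fun n => ?_
    simp only [_root_.mulFwdDiff]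
    group
  | @conj s t f g hf hg ihf ihg =>
    have hβ := conj ihg (inv hg)
    refine (conj (mul ((comm (inv hf) (inv hβ)).mono (by omega)) (conj ihf hβ)) hg).congr
      fun n => ?_
    simp only [_root_.mulFwdDiff, commutatorElement_def]
    group
  | @comm s t f g hf hg ihf ihg =>
    have hQ := mul ((comm ihf hg).mono (by omega))
      ((conj (comm ihf ihg) (inv hg)).mono (show s + t + 1 ≤ s + 1 + (t + 1) by omega))
    have hR := mul ((inv hf).mono (Nat.zero_le _)) ((comm hf hg).mono (Nat.zero_le _))
    have hlast := (conj (comm hf ihg) (inv hg)).mono (show s + t + 1 ≤ s + (t + 1) by omega)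
    refine (mul (conj hQ hR) hlast).congr fun n => ?_
    simp only [_root_.mulFwdDiff, commutatorElement_def]
    group

theorem iterate_mulFwdDiff (hf : IsPolySeq s f) (k : ℕ) :
    IsPolySeq (s + k) (_root_.mulFwdDiff^[k] f) := by
  induction k with
  | zero => exact hf
  | succ k ih =>
    rw [Function.iterate_succ_apply']
    exact ih.mulFwdDiff

end IsPolySeq

theorem mulFwdDiff_iterate_apply_zero {f : ℕ → G} {k : ℕ} (hf : ∀ j < k, f j = 1) :
    mulFwdDiff^[k] f 0 = f k := by
  induction k generalizing f with
  | zero => rfl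
  | succ k ih =>
    rw [Function.iterate_succ_apply, ih fun j hj => by
      simp [mulFwdDiff, hf j (by omega), hf (j + 1) (by omega)]]
    simp [mulFwdDiff, hf k (by omega)]

namespace IsPolySeq

variable {f : ℕ → G} {k : ℕ}

theorem apply_mem_of_forall_lt (hf : IsPolySeq 0 f) (hv : ∀ j < k, f j = 1) :
    f k ∈ lowerCentralGamma G k := by
  simpa [mulFwdDiff_iterate_apply_zero hv] using (hf.iterate_mulFwdDiff k).mem 0

theorem apply_prime_eq_one {p : ℕ} (hp : p.Prime) (hγ : lowerCentralGamma G p = ⊥)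
    (hcomm : ∀ x ∈ commutator G, x ^ p = 1) (hk : 2 ≤ k) (hf : IsPolySeq 0 f)
    (hv : ∀ j < k, f j = 1) : f p = 1 := by
  induction h : p + 1 - k generalizing k f with
  | zero => exact hv p (by omega)
  | succ m ih =>
    set g := f k
    have hf' : IsPolySeq 0 (fun n => (g ^ n.choose k)⁻¹ * f n) :=
      mul (inv (choosePow (hf.apply_mem_of_forall_lt hv) (by omega))) hf
    have hv' : ∀ j < k + 1, (g ^ j.choose k)⁻¹ * f j = 1 := by
      intro j hj
      rcases Nat.lt_or_ge j k with hjk | hjk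
      · simp [Nat.choose_eq_zero_of_lt hjk, hv j hjk]
      · obtain rfl : j = k := by omega
        simp [g]
    have hfp : f p = g ^ p.choose k :=
      (inv_mul_eq_one.mp (ih (by omega) hf' hv' (by omega))).symm
    rw [hfp]
    rcases Nat.lt_or_ge k p with hkp | hkp
    · have hg : g ∈ commutator G :=
        lowerCentralGamma_antitone hk (hf.apply_mem_of_forall_lt hv)
      obtain ⟨c, hc⟩ := hp.dvd_choose_self (by omega) hkp
      rw [hc, pow_mul, hcomm g hg, one_pow]
    · obtain rfl : k = p := by omega
      have hg : g = 1 := by simpa [hγ] using hf.apply_mem_of_forall_lt hv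
      rw [hg, one_pow]

end IsPolySeq

theorem mul_pow_prime_of_nilpotencyClass_lt [Group.IsNilpotent G] {p : ℕ} (hp : p.Prime)
    (hclass : Group.nilpotencyClass G < p) (hcomm : ∀ x ∈ commutator G, x ^ p = 1) (a b : G) :
    (a * b) ^ p = a ^ p * b ^ p := by
  have hγ : lowerCentralGamma G p = ⊥ :=
    Subgroup.lowerCentralSeries_eq_bot_iff_nilpotencyClass_le.mpr (by omega)
  have hf := (IsPolySeq.pow (a * b)).mul (IsPolySeq.pow b⁻¹) |>.mul (IsPolySeq.pow a⁻¹)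
  have hv : ∀ j < 2, (a * b) ^ j * b⁻¹ ^ j * a⁻¹ ^ j = 1 := by
    intro j hj
    interval_cases j <;> group
  have key := hf.apply_prime_eq_one hp hγ hcomm le_rfl hv
  rwa [inv_pow, inv_pow, mul_inv_eq_one, mul_inv_eq_iff_eq_mul] at key

end

theorem stmt1_general {P : Type*} [Group P] (p : ℕ) (hp : p.Prime)
    [Group.IsNilpotent P]
    (hclass : Group.nilpotencyClass P < p)
    (hgen : Subgroup.closure {x : P | x ^ p = 1} = ⊤)
    (hcomm : ∀ x ∈ commutator P, x ^ p = 1) :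
    ∀ x : P, x ^ p = 1 := by
  intro x
  induction hgen ▸ Subgroup.mem_top x using Subgroup.closure_induction with
  | mem x hx => exact hx
  | one => exact one_pow p
  | mul a b _ _ ha hb =>
    rw [mul_pow_prime_of_nilpotencyClass_lt hp hclass hcomm, ha, hb, one_mul]
  | inv a _ ha => rw [inv_pow, ha, inv_one]

/-- Hall's commutator-collection consequence: a finite `p`-group of nilpotency class `< p`,
generated by elements of order dividing `p`, all of whose commutators have order dividing `p`,
has exponent `p`. -/
theorem stmt1 {P : Type*} [Group P] [Finite P] (p : ℕ) (hp : p.Prime)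
    (hP : IsPGroup p P) [Group.IsNilpotent P]
    (hclass : Group.nilpotencyClass P < p)
    (hgen : Subgroup.closure {x : P | x ^ p = 1} = ⊤)
    (hcomm : ∀ x ∈ commutator P, x ^ p = 1) :
    ∀ x : P, x ^ p = 1 :=
  stmt1_general p hp hclass hgen hcomm
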